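/- Let (X,d,μ) be an upper doubling metric measure space with dominating function λ satisfying λ(x,r) ≤ C̃ λ(y,r) whenever d(x,y) ≤ r. Then there exists a constant C > 0 such that for all balls B ⊂ R ⊂ Q, K_{R,Q} ≤ C · K_{B,Q}, where K_{B,Q} = 1 + Σ_{k=1}^{N_{B,Q}} μ(6^k B)/λ(x_B, 6^k r_B). -/

import Mathlib

/-! For each scale `6^k r_R`, `1 ≤ k ≤ N_{R,Q}`, take the first `n` with `6^n r_B ≥ 2 · 6^k r_R`.
Then `6^n r_B < 12 · 6^k r_R`, so `6^k R ⊆ 6^n B`, and four doublings together with the comparison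
of `λ` at nearby centres give `λ(x_B, 6^n r_B) ≲ λ(x_R, 6^k r_R)`: the `k`-th term of `K_{R,Q}` is
dominated by the `n`-th term of `K_{B,Q}`. The map `k ↦ n` is injective and lands in
`[1, N_{B,Q}]` for all but at most two values of `k`, whose terms are at most `1` because
`μ(B(x,r)) ≤ λ(x,r)`. -/

open MeasureTheory Metric
open scoped ENNReal NNReal

/-- `N_{B,Q}`: the smallest integer `n` with `6^n r_B ≥ r_Q`. -/
noncomputable def NBQ (rB rQ : ℝ) : ℕ := sInf {n : ℕ | rQ ≤ 6 ^ n * rB}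

/-- The coefficient `K_{B,Q} = 1 + ∑_{k=1}^{N_{B,Q}} μ(6^k B)/λ(x_B, 6^k r_B)`. -/
noncomputable def Kcoef {X : Type*} [MetricSpace X] [MeasurableSpace X]
    (μ : Measure X) (lam : X → ℝ → ℝ) (xB : X) (rB rQ : ℝ) : ℝ≥0∞ :=
  1 + ∑ k ∈ Finset.Icc 1 (NBQ rB rQ),
      μ (ball xB ((6 : ℝ) ^ k * rB)) / ENNReal.ofReal (lam xB ((6 : ℝ) ^ k * rB))

open Finset

lemma NBQ_spec {rB rQ : ℝ} (hrB : 0 < rB) : rQ ≤ 6 ^ NBQ rB rQ * rB := by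
  refine Nat.sInf_mem (s := {n : ℕ | rQ ≤ 6 ^ n * rB}) ?_
  obtain ⟨n, hn⟩ := pow_unbounded_of_one_lt (rQ / rB) (by norm_num : (1 : ℝ) < 6)
  exact ⟨n, ((div_lt_iff₀ hrB).mp hn).le⟩

lemma NBQ_le {rB rQ : ℝ} {n : ℕ} (h : rQ ≤ 6 ^ n * rB) : NBQ rB rQ ≤ n :=
  Nat.sInf_le h

lemma pow_mul_lt_of_lt_NBQ {rB rQ : ℝ} {n : ℕ} (h : n < NBQ rB rQ) : 6 ^ n * rB < rQ :=
  not_le.mp (Nat.notMem_of_lt_sInf h)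

lemma pow_NBQ_mul_lt {rB rQ : ℝ} (h : rB < 6 * rQ) : 6 ^ NBQ rB rQ * rB < 6 * rQ := by
  cases hN : NBQ rB rQ with
  | zero => simpa using h
  | succ n =>
    have := pow_mul_lt_of_lt_NBQ (hN ▸ n.lt_succ_self : n < NBQ rB rQ)
    rw [pow_succ]
    linarith

lemma ENNReal.div_le_mul_div {a b c d e : ℝ≥0∞} (hab : a ≤ b) (hde : d ≤ c * e)
    (hd0 : d ≠ 0) (hdt : d ≠ ⊤) (he0 : e ≠ 0) (het : e ≠ ⊤) : a / e ≤ c * (b / d) := by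
  refine (ENNReal.div_le_div_right hab e).trans ?_
  rw [ENNReal.div_le_iff he0 het]
  calc b = b / d * d := (ENNReal.div_mul_cancel hd0 hdt).symm
    _ ≤ b / d * (c * e) := by gcongr
    _ = c * (b / d) * e := by ring

lemma Finset.sum_le_mul_sum_add_card {ι κ : Type*} [DecidableEq κ] {s : Finset ι}
    {t : Finset κ} {f : ι → ℝ≥0∞} {g : κ → ℝ≥0∞} {c : ℝ≥0∞} {j : ι → κ} (hj : Set.InjOn j s)
    (hf : ∀ k ∈ s, f k ≤ 1) (hfg : ∀ k ∈ s, j k ∈ t → f k ≤ c * g (j k)) :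
    ∑ k ∈ s, f k ≤ c * ∑ n ∈ t, g n + #{k ∈ s | j k ∉ t} := by
  rw [← sum_filter_add_sum_filter_not s (fun k => j k ∈ t)]
  gcongr
  · calc ∑ k ∈ s with j k ∈ t, f k ≤ ∑ k ∈ s with j k ∈ t, c * g (j k) :=
          sum_le_sum fun k hk => hfg k (mem_filter.mp hk).1 (mem_filter.mp hk).2
      _ = c * ∑ n ∈ image j {k ∈ s | j k ∈ t}, g n := by
          rw [← mul_sum, sum_image (hj.mono fun k hk => (mem_filter.mp hk).1)]
      _ ≤ c * ∑ n ∈ t, g n := by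
          gcongr
          exact image_subset_iff.mpr fun k hk => (mem_filter.mp hk).2
  · simpa using sum_le_card_nsmul _ _ 1 fun k hk => hf k (mem_filter.mp hk).1

section UpperDoubling

variable {X : Type*} {lam : X → ℝ → ℝ} {Clam : ℝ}

lemma doubling_const_pos (hpos : ∀ (x : X) (r : ℝ), 0 < r → 0 < lam x r)
    (hdoub : ∀ (x : X) (r : ℝ), 0 < r → lam x r ≤ Clam * lam x (r / 2)) (x : X) : 0 < Clam :=
  pos_of_mul_pos_left ((hpos x 1 one_pos).trans_le (hdoub x 1 one_pos)) (hpos x _ (by norm_num)).le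

lemma le_pow_mul_div_two_pow (hC : 0 ≤ Clam)
    (hdoub : ∀ (x : X) (r : ℝ), 0 < r → lam x r ≤ Clam * lam x (r / 2))
    (x : X) {r : ℝ} (hr : 0 < r) (n : ℕ) : lam x r ≤ Clam ^ n * lam x (r / 2 ^ n) := by
  induction n with
  | zero => simp
  | succ n ih =>
    calc lam x r ≤ Clam ^ n * lam x (r / 2 ^ n) := ih
      _ ≤ Clam ^ n * (Clam * lam x (r / 2 ^ n / 2)) := by
          gcongr; exact hdoub x _ (by positivity)
      _ = Clam ^ (n + 1) * lam x (r / 2 ^ (n + 1)) := by rw [pow_succ, pow_succ, div_div]; ring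

noncomputable def lamRatio [MetricSpace X] [MeasurableSpace X] (μ : Measure X)
    (lam : X → ℝ → ℝ) (x : X) (r : ℝ) : ℝ≥0∞ :=
  μ (ball x r) / ENNReal.ofReal (lam x r)

variable [MetricSpace X] [MeasurableSpace X] {μ : Measure X}

lemma Kcoef_eq (μ : Measure X) (lam : X → ℝ → ℝ) (x : X) (r R : ℝ) :
    Kcoef μ lam x r R = 1 + ∑ k ∈ Icc 1 (NBQ r R), lamRatio μ lam x (6 ^ k * r) := rfl

lemma lamRatio_le_one
    (hdom : ∀ (x : X) (r : ℝ), 0 < r → μ (ball x r) ≤ ENNReal.ofReal (lam x r))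
    {x : X} {r : ℝ} (hr : 0 < r) : lamRatio μ lam x r ≤ 1 :=
  (ENNReal.div_le_div_right (hdom x r hr) _).trans ENNReal.div_self_le_one

lemma lamRatio_le_mul_lamRatio {Ct : ℝ} (hpos : ∀ (x : X) (r : ℝ), 0 < r → 0 < lam x r)
    (hmono : ∀ (x : X) (r s : ℝ), 0 < r → r ≤ s → lam x r ≤ lam x s)
    (hdoub : ∀ (x : X) (r : ℝ), 0 < r → lam x r ≤ Clam * lam x (r / 2))
    (hcomp : ∀ (x y : X) (r : ℝ), dist x y ≤ r → lam x r ≤ Ct * lam y r)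
    {x y : X} {s t : ℝ} (hs : 0 < s) (hxy : dist x y ≤ s) (hst : 2 * s ≤ t) (hts : t ≤ 16 * s) :
    lamRatio μ lam x s ≤ ENNReal.ofReal (Clam ^ 4 * Ct) * lamRatio μ lam y t := by
  have ht : 0 < t := by linarith
  have hC := (doubling_const_pos hpos hdoub x).le
  have hlam : lam y t ≤ Clam ^ 4 * Ct * lam x s :=
    calc lam y t ≤ Clam ^ 4 * lam y (t / 2 ^ 4) := le_pow_mul_div_two_pow hC hdoub y ht 4
      _ ≤ Clam ^ 4 * lam y s := by gcongr; exact hmono y _ _ (by positivity) (by linarith)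
      _ ≤ Clam ^ 4 * (Ct * lam x s) := by gcongr; exact hcomp y x s (dist_comm x y ▸ hxy)
      _ = Clam ^ 4 * Ct * lam x s := by ring
  have hA : 0 ≤ Clam ^ 4 * Ct :=
    (pos_of_mul_pos_left ((hpos y t ht).trans_le hlam) (hpos x s hs).le).le
  refine ENNReal.div_le_mul_div (measure_mono (ball_subset_ball' (by linarith))) ?_
    (by simpa using hpos y t ht) ENNReal.ofReal_ne_top (by simpa using hpos x s hs)
    ENNReal.ofReal_ne_top
  rw [← ENNReal.ofReal_mul hA]
  exact ENNReal.ofReal_le_ofReal hlam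

end UpperDoubling

noncomputable def matchIndex (rB rR : ℝ) (k : ℕ) : ℕ := NBQ rB (2 * (6 ^ k * rR))

section MatchIndex

variable {rB rR : ℝ}

lemma le_pow_matchIndex_mul (hrB : 0 < rB) (k : ℕ) :
    2 * (6 ^ k * rR) ≤ 6 ^ matchIndex rB rR k * rB :=
  NBQ_spec hrB

lemma pow_matchIndex_mul_lt (hrB : 0 < rB) (hBR : rB ≤ rR) (k : ℕ) :
    6 ^ matchIndex rB rR k * rB < 12 * (6 ^ k * rR) := by
  have : rB < 6 * (2 * (6 ^ k * rR)) := by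
    nlinarith [one_le_pow₀ (by norm_num : (1 : ℝ) ≤ 6) (n := k)]
  exact (pow_NBQ_mul_lt this).trans_eq (by ring)

lemma matchIndex_strictMono (hrB : 0 < rB) (hBR : rB ≤ rR) : StrictMono (matchIndex rB rR) := by
  refine strictMono_nat_of_lt_succ fun k => ?_
  have h : 6 ^ matchIndex rB rR k * rB < 6 ^ matchIndex rB rR (k + 1) * rB := by
    have := le_pow_matchIndex_mul hrB (rR := rR) (k + 1)
    rw [pow_succ] at this
    linarith [pow_matchIndex_mul_lt hrB hBR k]
  exact (pow_lt_pow_iff_right₀ (by norm_num : (1 : ℝ) < 6)).mp (lt_of_mul_lt_mul_right h hrB.le)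

lemma NBQ_le_succ_of_matchIndex_notMem (hrB : 0 < rB) (hBR : rB ≤ rR) {rQ : ℝ}
    {k : ℕ} (h : matchIndex rB rR k ∉ Icc 1 (NBQ rB rQ)) : NBQ rR rQ ≤ k + 1 := by
  have h6k : (1 : ℝ) ≤ 6 ^ k := one_le_pow₀ (by norm_num)
  have hpos : matchIndex rB rR k ≠ 0 := fun h0 => by
    have := le_pow_matchIndex_mul hrB (rR := rR) k
    rw [h0, pow_zero, one_mul] at this
    nlinarith
  have hlt : NBQ rB rQ < matchIndex rB rR k := by
    simp only [mem_Icc, not_and_or, not_le] at h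
    omega
  replace hlt : 6 ^ NBQ rB rQ * rB < 2 * (6 ^ k * rR) := pow_mul_lt_of_lt_NBQ hlt
  refine NBQ_le ?_
  rw [pow_succ]
  nlinarith [NBQ_spec (rQ := rQ) hrB]

lemma card_filter_matchIndex_notMem_le (hrB : 0 < rB) (hBR : rB ≤ rR) (rQ : ℝ) :
    #{k ∈ Icc 1 (NBQ rR rQ) | matchIndex rB rR k ∉ Icc 1 (NBQ rB rQ)} ≤ 2 := by
  calc #{k ∈ Icc 1 (NBQ rR rQ) | matchIndex rB rR k ∉ Icc 1 (NBQ rB rQ)}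
      ≤ #(Icc (NBQ rR rQ - 1) (NBQ rR rQ)) := by
        refine card_le_card fun k hk => ?_
        rw [mem_filter, mem_Icc] at hk
        have := NBQ_le_succ_of_matchIndex_notMem hrB hBR hk.2
        rw [mem_Icc]
        omega
    _ ≤ 2 := by
        rw [Nat.card_Icc]
        omega

end MatchIndex

theorem Kcoef_mono_of_subset_general
    {X : Type*} [MetricSpace X] [MeasurableSpace X] (μ : Measure X)
    (lam : X → ℝ → ℝ) (Clam Ct : ℝ)
    (hpos : ∀ (x : X) (r : ℝ), 0 < r → 0 < lam x r)
    (hmono : ∀ (x : X) (r s : ℝ), 0 < r → r ≤ s → lam x r ≤ lam x s)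
    (hdom : ∀ (x : X) (r : ℝ), 0 < r → μ (ball x r) ≤ ENNReal.ofReal (lam x r))
    (hdoub : ∀ (x : X) (r : ℝ), 0 < r → lam x r ≤ Clam * lam x (r / 2))
    (hcomp : ∀ (x y : X) (r : ℝ), dist x y ≤ r → lam x r ≤ Ct * lam y r) :
    ∃ C : ℝ≥0∞, 0 < C ∧ C < ⊤ ∧
      ∀ (xB xR xQ : X) (rB rR rQ : ℝ), 0 < rB → rB ≤ rR → rR ≤ rQ →
        ball xB rB ⊆ ball xR rR → ball xR rR ⊆ ball xQ rQ →
        Kcoef μ lam xR rR rQ ≤ C * Kcoef μ lam xB rB rQ := by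
  set A := ENNReal.ofReal (Clam ^ 4 * Ct)
  refine ⟨A + 3, by positivity, by finiteness, ?_⟩
  intro xB xR xQ rB rR rQ hrB hBR _ hBR_sub _
  have hrR : 0 < rR := hrB.trans_le hBR
  have hdist : dist xR xB ≤ rR := (mem_ball'.mp (hBR_sub (mem_ball_self hrB))).le
  set SB := ∑ n ∈ Icc 1 (NBQ rB rQ), lamRatio μ lam xB (6 ^ n * rB)
  have hsum : ∑ k ∈ Icc 1 (NBQ rR rQ), lamRatio μ lam xR (6 ^ k * rR) ≤ A * SB + 2 := by
    have hcomparable (k : ℕ) : lamRatio μ lam xR (6 ^ k * rR) ≤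
        A * lamRatio μ lam xB (6 ^ matchIndex rB rR k * rB) := by
      have h6k : (1 : ℝ) ≤ 6 ^ k := one_le_pow₀ (by norm_num)
      exact lamRatio_le_mul_lamRatio hpos hmono hdoub hcomp (by positivity) (by nlinarith)
        (le_pow_matchIndex_mul hrB k) (by nlinarith [pow_matchIndex_mul_lt hrB hBR k])
    refine (sum_le_mul_sum_add_card (t := Icc 1 (NBQ rB rQ))
      (g := fun n => lamRatio μ lam xB (6 ^ n * rB))
      (matchIndex_strictMono hrB hBR).injective.injOn
      (fun k _ => lamRatio_le_one hdom (by positivity)) fun k _ _ => hcomparable k).trans ?_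
    gcongr
    exact_mod_cast card_filter_matchIndex_notMem_le hrB hBR rQ
  rw [Kcoef_eq, Kcoef_eq]
  calc 1 + ∑ k ∈ Icc 1 (NBQ rR rQ), lamRatio μ lam xR (6 ^ k * rR) ≤ 1 + (A * SB + 2) := by
        gcongr
    _ = A * SB + 3 * 1 := by ring
    _ ≤ A * (1 + SB) + 3 * (1 + SB) := by
        gcongr
        exacts [le_add_self, le_self_add]
    _ = (A + 3) * (1 + SB) := by ring

/-- For balls `B ⊂ R ⊂ Q`, `K_{R,Q} ≤ C K_{B,Q}`. -/
theorem Kcoef_mono_of_subset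
    {X : Type*} [MetricSpace X] [MeasurableSpace X] (μ : Measure X)
    (lam : X → ℝ → ℝ) (Clam Ct : ℝ) (hClam : 1 ≤ Clam)
    (hpos : ∀ (x : X) (r : ℝ), 0 < r → 0 < lam x r)
    (hmono : ∀ (x : X) (r s : ℝ), 0 < r → r ≤ s → lam x r ≤ lam x s)
    (hdom : ∀ (x : X) (r : ℝ), 0 < r → μ (ball x r) ≤ ENNReal.ofReal (lam x r))
    (hdoub : ∀ (x : X) (r : ℝ), 0 < r → lam x r ≤ Clam * lam x (r / 2))
    (hcomp : ∀ (x y : X) (r : ℝ), dist x y ≤ r → lam x r ≤ Ct * lam y r) :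
    ∃ C : ℝ≥0∞, 0 < C ∧ C < ⊤ ∧
      ∀ (xB xR xQ : X) (rB rR rQ : ℝ), 0 < rB → rB ≤ rR → rR ≤ rQ →
        ball xB rB ⊆ ball xR rR → ball xR rR ⊆ ball xQ rQ →
        Kcoef μ lam xR rR rQ ≤ C * Kcoef μ lam xB rB rQ :=
  Kcoef_mono_of_subset_general μ lam Clam Ct hpos hmono hdom hdoub hcomp
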